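/- arXiv:2207.01526 — 4 statements merged into one kernel-verified Lean document; each statement's English description precedes it below -/
import Mathlib

section
/- Assume W satisfies assumption (H1) with exponent p ∈ (1,2], let Q̃ ∈ SO(3), and define V : ℝ^{3×3} → [0,∞) by V(F) := W(I + Q̃FQ̃ᵀ). Then there is a constant c ≥ 1, depending only on W and p, such that V(a+b) ≤ c V(a) + c Φ_p(|b|) for all a, b ∈ ℝ^{3×3}, where |b| is the Frobenius norm. -/
/-! By the growth condition, `W` is comparable to `Φ_p ∘ dist(·, SO(3))`. The distance to `SO(3)`
is 1-Lipschitz, `Φ_p` is monotone and doubling (`Φ_p(s + t) ≤ 4 (Φ_p(s) + Φ_p(t))` since `p ≤ 2`),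
and conjugation by `Q̃` preserves the Frobenius norm, so `V(a + b) ≤ 4c² V(a) + 4c Φ_p(|b|)`. -/

open MeasureTheory Real Filter Metric Set Matrix
noncomputable section

attribute [local instance] Matrix.frobeniusNormedAddCommGroup Matrix.frobeniusNormedSpace

local instance : MeasurableSpace (Matrix (Fin 3) (Fin 3) ℝ) := borel _
local instance : BorelSpace (Matrix (Fin 3) (Fin 3) ℝ) := ⟨rfl⟩

abbrev Mat3 := Matrix (Fin 3) (Fin 3) ℝ

/-- Φ_p(t) = min(t^p, t²) -/
def Phi (p t : ℝ) : ℝ := min (t ^ p) (t ^ (2:ℝ))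

/-- SO(3) -/
def SO3 : Set Mat3 := {Q | Q * Qᵀ = 1 ∧ Q.det = 1}

/-- Frobenius distance to SO(3) -/
def distSO3 (F : Mat3) : ℝ := Metric.infDist F SO3

/-- assumption (H1) on W with exponent p: W is Borel, nonnegative, frame indifferent,
twice differentiable in a neighbourhood of the identity, and has mixed p,2-growth. -/
def AssumptionH1 (W : Mat3 → ℝ) (p : ℝ) : Prop :=
  Measurable W ∧
  (∀ F, 0 ≤ W F) ∧
  (∀ F Q, Q ∈ SO3 → W (F * Q) = W F) ∧
  (∃ s ∈ nhds (1 : Mat3), ∀ F ∈ s,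
      DifferentiableAt ℝ W F ∧ DifferentiableAt ℝ (fderiv ℝ W) F) ∧
  (∃ c : ℝ, 1 ≤ c ∧ ∀ F, (1/c) * Phi p (distSO3 F) ≤ W F ∧ W F ≤ c * Phi p (distSO3 F))

theorem Matrix.frobenius_norm_sq_eq_trace {m n : Type*} [Fintype m] [Fintype n]
    (A : Matrix m n ℝ) : ‖A‖ ^ 2 = trace (A * Aᵀ) := by
  rw [frobenius_norm_def, ← Real.rpow_natCast, ← Real.rpow_mul (by positivity)]
  norm_num [trace, mul_apply, sq]

theorem Matrix.frobenius_norm_conj_orthogonal {n : Type*} [Fintype n] [DecidableEq n]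
    {Q : Matrix n n ℝ} (hQ : Q * Qᵀ = 1) (A : Matrix n n ℝ) : ‖Q * A * Qᵀ‖ = ‖A‖ := by
  have hQ' : Qᵀ * Q = 1 := mul_eq_one_comm.mp hQ
  refine (sq_eq_sq₀ (norm_nonneg _) (norm_nonneg _)).mp ?_
  rw [frobenius_norm_sq_eq_trace, frobenius_norm_sq_eq_trace, transpose_mul, transpose_mul,
    transpose_transpose]
  calc trace (Q * A * Qᵀ * (Q * (Aᵀ * Qᵀ))) = trace (Q * (A * Aᵀ) * Qᵀ) := by
        simp only [Matrix.mul_assoc, ← Matrix.mul_assoc Qᵀ Q, hQ', Matrix.one_mul]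
    _ = trace (A * Aᵀ) := by rw [trace_mul_cycle, hQ', Matrix.one_mul]

theorem Phi_nonneg (p : ℝ) {t : ℝ} (ht : 0 ≤ t) : 0 ≤ Phi p t :=
  le_min (rpow_nonneg ht p) (rpow_nonneg ht 2)

theorem Phi_le_Phi {p : ℝ} (hp : 0 ≤ p) {s t : ℝ} (hs : 0 ≤ s) (hst : s ≤ t) :
    Phi p s ≤ Phi p t :=
  min_le_min (rpow_le_rpow hs hst hp) (rpow_le_rpow hs hst zero_le_two)

theorem Phi_mul_le {p k t : ℝ} (hp : p ≤ 2) (hk : 1 ≤ k) (ht : 0 ≤ t) :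
    Phi p (k * t) ≤ k ^ 2 * Phi p t := by
  have hk0 : 0 ≤ k := zero_le_one.trans hk
  rw [Phi, Phi, mul_min_of_nonneg _ _ (by positivity), mul_rpow hk0 ht, mul_rpow hk0 ht]
  refine min_le_min (mul_le_mul_of_nonneg_right ?_ (rpow_nonneg ht p)) (by norm_cast)
  calc k ^ p ≤ k ^ (2 : ℝ) := rpow_le_rpow_of_exponent_le hk hp
    _ = k ^ 2 := by norm_cast

theorem Phi_add_le {p : ℝ} (hp₀ : 0 ≤ p) (hp : p ≤ 2) {s t : ℝ} (hs : 0 ≤ s) (ht : 0 ≤ t) :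
    Phi p (s + t) ≤ 4 * (Phi p s + Phi p t) := by
  wlog hst : s ≤ t generalizing s t
  · simpa only [add_comm] using this ht hs (le_of_not_ge hst)
  calc Phi p (s + t) ≤ Phi p (2 * t) := Phi_le_Phi hp₀ (add_nonneg hs ht) (by linarith)
    _ ≤ 2 ^ 2 * Phi p t := Phi_mul_le hp one_le_two ht
    _ ≤ 4 * (Phi p s + Phi p t) := by nlinarith [Phi_nonneg p hs]

theorem distSO3_add_le (F G : Mat3) : distSO3 (F + G) ≤ distSO3 F + ‖G‖ := by
  simpa [distSO3, dist_eq_norm] using infDist_le_infDist_add_dist (s := SO3) (x := F + G) (y := F)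

theorem apply_add_le_of_Phi_growth {W : Mat3 → ℝ} {p c : ℝ} (hp₀ : 0 ≤ p) (hp : p ≤ 2)
    (hc : 1 ≤ c)
    (hW : ∀ F, (1/c) * Phi p (distSO3 F) ≤ W F ∧ W F ≤ c * Phi p (distSO3 F)) (F G : Mat3) :
    W (F + G) ≤ 4 * c ^ 2 * W F + 4 * c * Phi p ‖G‖ := by
  have hc₀ : 0 < c := zero_lt_one.trans_le hc
  have hF : Phi p (distSO3 F) ≤ c * W F := by
    have := (hW F).1; rwa [one_div, inv_mul_le_iff₀ hc₀] at this
  calc W (F + G) ≤ c * Phi p (distSO3 (F + G)) := (hW _).2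
    _ ≤ c * (4 * (Phi p (distSO3 F) + Phi p ‖G‖)) := by
      gcongr
      exact (Phi_le_Phi hp₀ infDist_nonneg (distSO3_add_le F G)).trans
        (Phi_add_le hp₀ hp infDist_nonneg (norm_nonneg G))
    _ ≤ c * (4 * (c * W F + Phi p ‖G‖)) := by gcongr
    _ = 4 * c ^ 2 * W F + 4 * c * Phi p ‖G‖ := by ring

/-- Assume W satisfies assumption (H1) with exponent p ∈ (1,2], let Q̃ ∈ SO(3), and define
V(F) := W(I + Q̃FQ̃ᵀ). Then there is a constant c ≥ 1, depending only on W and p, such that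
V(a+b) ≤ c V(a) + c Φ_p(|b|) for all a, b ∈ ℝ^{3×3} (Frobenius norm). -/
theorem statement1 (W : Mat3 → ℝ) (p : ℝ) (hp : p ∈ Set.Ioc (1:ℝ) 2)
    (hW : AssumptionH1 W p) :
    ∃ c : ℝ, 1 ≤ c ∧ ∀ Qt ∈ SO3, ∀ a b : Mat3,
      (fun F => W (1 + Qt * F * Qtᵀ)) (a + b) ≤
        c * (fun F => W (1 + Qt * F * Qtᵀ)) a + c * Phi p ‖b‖ := by
  obtain ⟨-, -, -, -, c, hc, hgrowth⟩ := hW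
  refine ⟨4 * c ^ 2, by nlinarith, fun Qt hQt a b => ?_⟩
  have hconj : 1 + Qt * (a + b) * Qtᵀ = (1 + Qt * a * Qtᵀ) + Qt * b * Qtᵀ := by noncomm_ring
  have hb : Phi p ‖Qt * b * Qtᵀ‖ = Phi p ‖b‖ := by rw [frobenius_norm_conj_orthogonal hQt.1]
  have hPhi := Phi_nonneg p (norm_nonneg b)
  calc W (1 + Qt * (a + b) * Qtᵀ)
      ≤ 4 * c ^ 2 * W (1 + Qt * a * Qtᵀ) + 4 * c * Phi p ‖b‖ := by
        rw [hconj, ← hb]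
        exact apply_add_le_of_Phi_growth (by linarith [hp.1]) hp.2 hc hgrowth _ _
    _ ≤ 4 * c ^ 2 * W (1 + Qt * a * Qtᵀ) + 4 * c ^ 2 * Phi p ‖b‖ := by
        gcongr; nlinarith

end
end

section
/- Let ℂ be an elasticity tensor and Q ∈ SO(3), and define the rotated tensor ℂ_Q by ℂ_Q A·B := ℂ(QAQᵀ)·(QBQᵀ) for A, B ∈ ℝ^{3×3}. Then ψ_ℂ(b,Q') = ψ_{ℂ_Q}(Qᵀb, QᵀQ') for all b ∈ ℝ³ and all Q' ∈ SO(3); equivalently, writing t = Q'e₃, the line tension satisfies ψ_ℂ(b,t) = ψ_{ℂ_Q}(Qᵀb, Qᵀt). -/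
open MeasureTheory Real Filter Metric Set Matrix
noncomputable section

attribute [local instance] Matrix.frobeniusNormedAddCommGroup Matrix.frobeniusNormedSpace

abbrev E3 := EuclideanSpace ℝ (Fin 3)
/-- Euclidean norm of a vector in ℝ³ given as `Fin 3 → ℝ` -/
def enorm3 (b : Fin 3 → ℝ) : ℝ := Real.sqrt (∑ i, (b i)^2)

/-- Levi-Civita symbol -/
def levi (i j k : Fin 3) : ℝ :=
  ((((j.val:ℤ) - (i.val:ℤ)) * (((k.val:ℤ)) - (j.val:ℤ)) * (((k.val:ℤ)) - (i.val:ℤ)) : ℤ) : ℝ) / 2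

/-- action of a matrix on a point of ℝ³ -/
def rotPt (Q : Mat3) (x : E3) : E3 := WithLp.toLp 2 (fun i => ∑ j, Q i j * x j)

def rotSet (Q : Mat3) (S : Set E3) : Set E3 := rotPt Q '' S

/-- i-th column of Q, as a point of ℝ³ (Q eᵢ) -/
def colv (Q : Mat3) (i : Fin 3) : E3 := WithLp.toLp 2 (fun a => Q a i)

/-- the line ℝ t -/
def lineThrough (t : E3) : Set E3 := Set.range fun s : ℝ => s • t

/-- hollow tube T_h^{R,r} -/
def Tube (R r h : ℝ) : Set E3 :=
  {x | (x 0)^2 + (x 1)^2 < R^2 ∧ r^2 ≤ (x 0)^2 + (x 1)^2 ∧ 0 < x 2 ∧ x 2 < h}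

/-- full tube T_h^R -/
def TubeFull (R h : ℝ) : Set E3 := Tube R 0 h

/-- test functions for distributional identities on U -/
def IsTest (U : Set E3) (φ : E3 → ℝ) : Prop :=
  ContDiff ℝ ((⊤ : ℕ∞) : WithTop ℕ∞) φ ∧ HasCompactSupport φ ∧ tsupport φ ⊆ U

/-- curl β = 0 distributionally in U -/
def CurlZeroOn (β : E3 → Mat3) (U : Set E3) : Prop :=
  ∀ φ : E3 → ℝ, IsTest U φ → ∀ a i : Fin 3,
    ∑ j : Fin 3, ∑ k : Fin 3,
      levi i j k * ∫ x in U, β x a k * fderiv ℝ φ x (EuclideanSpace.single j 1) = 0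

/-- curl β = b ⊗ t ℋ¹⌊S distributionally in U -/
def CurlEqLine (β : E3 → Mat3) (U : Set E3) (b : Fin 3 → ℝ) (t : E3) (S : Set E3) : Prop :=
  ∀ φ : E3 → ℝ, IsTest U φ → ∀ a i : Fin 3,
    -(∑ j : Fin 3, ∑ k : Fin 3,
        levi i j k * ∫ x in U, β x a k * fderiv ℝ φ x (EuclideanSpace.single j 1)) =
      b a * t i * ∫ x in S, φ x ∂(μH[1])

/-- elasticity tensor as a bilinear form -/
def IsElasticityTensor (C : Mat3 → Mat3 → ℝ) : Prop :=
  (∀ A B, C A B = C B A) ∧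
  (∀ A B₁ B₂, C A (B₁ + B₂) = C A B₁ + C A B₂) ∧
  (∀ (c : ℝ) A B, C A (c • B) = c * C A B) ∧
  (∃ c₀ > 0, ∀ A, c₀ * ‖A + Aᵀ‖^2 ≤ C A A) ∧
  (∀ S B, Sᵀ = -S → C S B = 0)

def erv (θ : ℝ) : Fin 3 → ℝ := ![Real.cos θ, Real.sin θ, 0]
def eθv (θ : ℝ) : Fin 3 → ℝ := ![-Real.sin θ, Real.cos θ, 0]

/-- the competitor strain profiles for the line-tension cell problem -/
def psiProfile (Q : Mat3) (f : ℝ → Fin 3 → ℝ) (g : Fin 3 → ℝ) (θ : ℝ) : Mat3 :=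
  Matrix.vecMulVec (f θ) (Q.mulVec (eθv θ)) + Matrix.vecMulVec g (Q.mulVec (erv θ))

/-- the line-tension energy ψ_ℂ(b, Q) -/
def psi (C : Mat3 → Mat3 → ℝ) (b : Fin 3 → ℝ) (Q : Mat3) : ℝ :=
  sInf {v | ∃ (f : ℝ → Fin 3 → ℝ) (g : Fin 3 → ℝ),
    MemLp f 2 (volume.restrict (Set.Ioo 0 (2*π))) ∧
    (∫ θ in Set.Ioo (0:ℝ) (2*π), f θ) = b ∧
    v = ∫ θ in Set.Ioo (0:ℝ) (2*π),
        (1/2) * C (psiProfile Q f g θ) (psiProfile Q f g θ)}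

/-- Bravais lattice -/
def Bravais (A : Mat3) : Set (Fin 3 → ℝ) :=
  {b | ∃ m : Fin 3 → ℤ, b = A.mulVec fun i => (m i : ℝ)}

/-! The substitution `(f, g) ↦ (Qᵀ f, Qᵀ g)` maps the competitors for `ψ_ℂ(b, Q')` to competitors
for `ψ_{ℂ_Q}(Qᵀ b, Qᵀ Q')` with the same energy, because `Q (u ⊗ Qᵀ w) Qᵀ = (Q u) ⊗ w`.
Applying this inclusion of energy sets also to `Qᵀ` and `ℂ_Q`, and using `(ℂ_Q)_{Qᵀ} = ℂ`,
gives the reverse inclusion, so the two infima are taken over the same set. -/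

def psiEnergies (C : Mat3 → Mat3 → ℝ) (b : Fin 3 → ℝ) (Q : Mat3) : Set ℝ :=
  {v | ∃ (f : ℝ → Fin 3 → ℝ) (g : Fin 3 → ℝ),
    MemLp f 2 (volume.restrict (Set.Ioo 0 (2*π))) ∧
    (∫ θ in Set.Ioo (0:ℝ) (2*π), f θ) = b ∧
    v = ∫ θ in Set.Ioo (0:ℝ) (2*π),
        (1/2) * C (psiProfile Q f g θ) (psiProfile Q f g θ)}

lemma psi_eq_sInf_psiEnergies (C : Mat3 → Mat3 → ℝ) (b : Fin 3 → ℝ) (Q : Mat3) :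
    psi C b Q = sInf (psiEnergies C b Q) := rfl

lemma mul_vecMulVec_mul_transpose {α m n : Type*} [CommSemiring α] [Fintype m] [Fintype n]
    (A : Matrix m m α) (B : Matrix n n α) (u : m → α) (w : n → α) :
    A * vecMulVec u w * Bᵀ = vecMulVec (A *ᵥ u) (B *ᵥ w) := by
  rw [mul_vecMulVec, vecMulVec_mul, vecMul_transpose]

lemma conj_psiProfile_transpose_mul {Q : Mat3} (hQ : Q * Qᵀ = 1) (Q' : Mat3)
    (f : ℝ → Fin 3 → ℝ) (g : Fin 3 → ℝ) (θ : ℝ) :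
    Q * psiProfile (Qᵀ * Q') f g θ * Qᵀ = psiProfile Q' (fun s => Q *ᵥ f s) (Q *ᵥ g) θ := by
  simp only [psiProfile, mul_add, add_mul, mul_vecMulVec_mul_transpose, mulVec_mulVec,
    ← Matrix.mul_assoc, hQ, Matrix.one_mul]

lemma MeasureTheory.MemLp.mulVec {α : Type*} [MeasurableSpace α] {μ : Measure α} {p : ENNReal}
    {m n : Type*} [Fintype m] [Fintype n] (A : Matrix m n ℝ) {f : α → n → ℝ}
    (hf : MemLp f p μ) : MemLp (fun x => A *ᵥ f x) p μ :=
  (mulVecLin A).toContinuousLinearMap.comp_memLp' hf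

lemma integral_mulVec {α : Type*} [MeasurableSpace α] {μ : Measure α}
    {m n : Type*} [Fintype m] [Fintype n] (A : Matrix m n ℝ) {f : α → n → ℝ}
    (hf : Integrable f μ) : ∫ x, A *ᵥ f x ∂μ = A *ᵥ ∫ x, f x ∂μ :=
  (mulVecLin A).toContinuousLinearMap.integral_comp_comm hf

lemma psiEnergies_subset_rotate (C : Mat3 → Mat3 → ℝ) (b : Fin 3 → ℝ) {Q : Mat3}
    (hQ : Q * Qᵀ = 1) (Q' : Mat3) :
    psiEnergies C b Q' ⊆
      psiEnergies (fun A B => C (Q * A * Qᵀ) (Q * B * Qᵀ)) (Qᵀ *ᵥ b) (Qᵀ * Q') := by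
  have : IsFiniteMeasure (volume.restrict (Ioo (0:ℝ) (2*π))) :=
    ⟨by simp [Real.volume_Ioo, ENNReal.mul_lt_top]⟩
  rintro _ ⟨f, g, hf, hfb, rfl⟩
  have hQQ : ∀ u : Fin 3 → ℝ, Q *ᵥ Qᵀ *ᵥ u = u := fun u => by
    rw [mulVec_mulVec, hQ, one_mulVec]
  refine ⟨fun θ => Qᵀ *ᵥ f θ, Qᵀ *ᵥ g, hf.mulVec Qᵀ, ?_, ?_⟩
  · rw [integral_mulVec Qᵀ (hf.integrable one_le_two), hfb]
  · simp only [conj_psiProfile_transpose_mul hQ, hQQ]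

theorem statement7_general (C : Mat3 → Mat3 → ℝ)
    (Q : Mat3) (hQ : Q ∈ SO3) (b : Fin 3 → ℝ) (Q' : Mat3) :
    psi C b Q' =
      psi (fun A B => C (Q * A * Qᵀ) (Q * B * Qᵀ)) (Qᵀ.mulVec b) (Qᵀ * Q') := by
  have hQ₁ : Q * Qᵀ = 1 := hQ.1
  have hQ₂ : Qᵀ * Qᵀᵀ = 1 := by rw [transpose_transpose, mul_eq_one_comm.mp hQ₁]
  have hC_back : (fun A B => C (Q * (Qᵀ * A * Qᵀᵀ) * Qᵀ) (Q * (Qᵀ * B * Qᵀᵀ) * Qᵀ)) = C := by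
    funext A B
    simp only [transpose_transpose, ← Matrix.mul_assoc, hQ₁, Matrix.one_mul]
    simp only [Matrix.mul_assoc, hQ₁, Matrix.mul_one]
  have hb_back : Qᵀᵀ *ᵥ Qᵀ *ᵥ b = b := by rw [transpose_transpose, mulVec_mulVec, hQ₁, one_mulVec]
  have hQ'_back : Qᵀᵀ * (Qᵀ * Q') = Q' := by
    rw [transpose_transpose, ← Matrix.mul_assoc, hQ₁, Matrix.one_mul]
  have hrotate_back := psiEnergies_subset_rotate (fun A B => C (Q * A * Qᵀ) (Q * B * Qᵀ))
    (Qᵀ *ᵥ b) hQ₂ (Qᵀ * Q')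
  rw [hC_back, hb_back, hQ'_back] at hrotate_back
  rw [psi_eq_sInf_psiEnergies, psi_eq_sInf_psiEnergies,
    subset_antisymm (psiEnergies_subset_rotate C b hQ₁ Q') hrotate_back]

/-- Let ℂ be an elasticity tensor and Q ∈ SO(3), and define ℂ_Q A·B := ℂ(QAQᵀ)·(QBQᵀ).
Then ψ_ℂ(b,Q') = ψ_{ℂ_Q}(Qᵀb, QᵀQ') for all b ∈ ℝ³ and Q' ∈ SO(3). -/
theorem statement7 (C : Mat3 → Mat3 → ℝ) (hC : IsElasticityTensor C)
    (Q : Mat3) (hQ : Q ∈ SO3) (b : Fin 3 → ℝ) (Q' : Mat3) (hQ' : Q' ∈ SO3) :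
    psi C b Q' =
      psi (fun A B => C (Q * A * Qᵀ) (Q * B * Qᵀ)) (Qᵀ.mulVec b) (Qᵀ * Q') :=
  statement7_general C Q hQ b Q'
end
end

section
/- Let v ∈ ℝ³ with |v| = 1, let F : ℝ² → ℝ³ be Lipschitz, and let r > 0. Then for Lebesgue-almost every a ∈ ℝ³ the following holds: the set {y' ∈ B'_r : F(y') ∈ a + ℝv} is finite, and at every point y' of this set F is differentiable and v does not belong to the linear span of the partial derivatives ∂₁F(y') and ∂₂F(y'). -/
open MeasureTheory Real Filter Metric Set
noncomputable section

abbrev E2 := EuclideanSpace ℝ (Fin 2)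

/-!
The map `(y, t) ↦ F y - t • v` is Lipschitz between spaces of the same dimension three. Lipschitz
maps send null sets to null sets, so by Rademacher's theorem and the equidimensional Sard lemma
almost every `a` is a regular value of it. At a point `(y, t)` of the fibre over `a`, injectivity
of the derivative `(h, s) ↦ dF(y) h - s • v` says precisely that `v ∉ range dF(y)`; it also makes
the fibre discrete, hence finite over the bounded set of `y` in the ball, where `t` is bounded
as well.
-/

open scoped NNReal ENNReal

section Regularity

variable {E F : Type*} [NormedAddCommGroup E] [NormedSpace ℝ E]
  [NormedAddCommGroup F] [NormedSpace ℝ F]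

/-- Injective rather than surjective derivative: the two notions agree between spaces of equal
finite dimension. -/
def IsRegularValue (f : E → F) (a : F) : Prop :=
  ∀ x, f x = a → DifferentiableAt ℝ f x ∧ Function.Injective (fderiv ℝ f x)

theorem IsRegularValue.of_comp_continuousLinearEquiv {E' : Type*} [NormedAddCommGroup E']
    [NormedSpace ℝ E'] {f : E → F} {a : F} (e : E' ≃L[ℝ] E) (h : IsRegularValue (f ∘ e) a) :
    IsRegularValue f a := by
  intro x hx
  obtain ⟨hd, hinj⟩ := h (e.symm x) (by simpa using hx)
  rw [e.comp_right_differentiableAt_iff, e.apply_symm_apply] at hd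
  rw [e.comp_right_fderiv, e.apply_symm_apply] at hinj
  exact ⟨hd, Function.Injective.of_comp_right (f := fderiv ℝ f x) (g := e) hinj e.surjective⟩

theorem IsRegularValue.isDiscrete_preimage [FiniteDimensional ℝ E] {f : E → F} {a : F}
    (h : IsRegularValue f a) : IsDiscrete (f ⁻¹' {a}) := by
  refine isDiscrete_iff_nhdsNE.mpr fun x hx => inf_principal_eq_bot.mpr ?_
  obtain ⟨hd, hinj⟩ := h x hx
  obtain ⟨C, -, hC⟩ :=
    (LinearMap.injective_iff_antilipschitz (fderiv ℝ f x : E →ₗ[ℝ] F)).mp hinj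
  exact hd.hasFDerivAt.eventually_ne ⟨C, hC⟩

theorem IsRegularValue.finite_inter_preimage [FiniteDimensional ℝ E] {f : E → F} {a : F}
    (h : IsRegularValue f a) (hf : Continuous f) {K : Set E} (hK : IsCompact K) :
    (K ∩ f ⁻¹' {a}).Finite :=
  (hK.inter_right (isClosed_singleton.preimage hf)).finite
    (h.isDiscrete_preimage.mono inter_subset_right)

end Regularity

section Sard

variable {E : Type*} [NormedAddCommGroup E] [NormedSpace ℝ E] [FiniteDimensional ℝ E]
  [MeasurableSpace E] [BorelSpace E] (μ : Measure E) [μ.IsAddHaarMeasure]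

/-- Lipschitz maps do not increase `finrank`-dimensional Hausdorff measure by more than a
constant factor, and that measure is an additive Haar measure. -/
theorem LipschitzWith.addHaar_image_eq_zero {f : E → E} {K : ℝ≥0} (hf : LipschitzWith K f)
    {s : Set E} (hs : μ s = 0) : μ (f '' s) = 0 := by
  set d := Module.finrank ℝ E
  have hμH : (μH[d] : Measure E) ≪ μ := Measure.absolutelyContinuous_isAddHaarMeasure _ _
  have hμ : μ ≪ (μH[d] : Measure E) := Measure.absolutelyContinuous_isAddHaarMeasure _ _
  apply hμ
  refine le_antisymm ?_ zero_le
  calc μH[d] (f '' s) ≤ (K : ℝ≥0∞) ^ (d : ℝ) * μH[d] s :=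
        hf.hausdorffMeasure_image_le d.cast_nonneg s
    _ = 0 := by rw [hμH hs, mul_zero]

theorem LipschitzWith.ae_isRegularValue_self {f : E → E} {K : ℝ≥0} (hf : LipschitzWith K f) :
    ∀ᵐ a ∂μ, IsRegularValue f a := by
  have h_nondiff : μ (f '' {x | ¬ DifferentiableAt ℝ f x}) = 0 :=
    hf.addHaar_image_eq_zero μ (ae_iff.mp (hf.ae_differentiableAt (μ := μ)))
  have h_crit : μ (f '' {x | DifferentiableAt ℝ f x ∧ (fderiv ℝ f x).det = 0}) = 0 :=
    addHaar_image_eq_zero_of_det_fderivWithin_eq_zero μ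
      (fun x hx => hx.1.hasFDerivAt.hasFDerivWithinAt) (fun x hx => hx.2)
  filter_upwards [measure_eq_zero_iff_ae_notMem.mp (measure_union_null h_nondiff h_crit)]
    with a ha x hx
  have hd : DifferentiableAt ℝ f x := by_contra fun h => ha (Or.inl ⟨x, h, hx⟩)
  have hdet : (fderiv ℝ f x).det ≠ 0 := fun h => ha (Or.inr ⟨x, ⟨hd, h⟩, hx⟩)
  exact ⟨hd, LinearMap.ker_eq_bot.mp
    (by_contra fun hker => hdet (LinearMap.det_eq_zero_iff_ker_ne_bot.mpr hker))⟩

theorem LipschitzWith.ae_isRegularValue {E' : Type*} [NormedAddCommGroup E'] [NormedSpace ℝ E']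
    [FiniteDimensional ℝ E'] (hdim : Module.finrank ℝ E' = Module.finrank ℝ E)
    {f : E' → E} {K : ℝ≥0} (hf : LipschitzWith K f) :
    ∀ᵐ a ∂μ, IsRegularValue f a := by
  let e : E ≃L[ℝ] E' := ContinuousLinearEquiv.ofFinrankEq hdim.symm
  filter_upwards [(hf.comp e.lipschitz).ae_isRegularValue_self μ] with a ha
  exact ha.of_comp_continuousLinearEquiv e

end Sard

section LineSweep

variable {E W : Type*} [NormedAddCommGroup W] [NormedSpace ℝ W] {F : E → W} {v a : W}

def lineSweep (F : E → W) (v : W) (p : E × ℝ) : W := F p.1 - p.2 • v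

variable [NormedAddCommGroup E]

theorem LipschitzWith.lineSweep {K : ℝ≥0} (hF : LipschitzWith K F) (v : W) :
    LipschitzWith (K + ‖v‖₊) (lineSweep F v) := by
  have hsmul : LipschitzWith ‖v‖₊ fun t : ℝ => t • v :=
    LipschitzWith.of_dist_le_mul fun s t => by
      simp [dist_eq_norm, ← sub_smul, norm_smul, mul_comm]
  have h := (hF.comp LipschitzWith.prod_fst).sub (hsmul.comp LipschitzWith.prod_snd)
  rw [mul_one, mul_one] at h
  exact h

variable [NormedSpace ℝ E]

theorem HasFDerivAt.lineSweep {F' : E →L[ℝ] W} {y : E} (hF : HasFDerivAt F F' y) (v : W)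
    (t : ℝ) :
    HasFDerivAt (lineSweep F v)
      (F'.comp (ContinuousLinearMap.fst ℝ E ℝ) - (ContinuousLinearMap.snd ℝ E ℝ).smulRight v)
      (y, t) :=
  (hF.comp (y, t) hasFDerivAt_fst).sub ((ContinuousLinearMap.snd ℝ E ℝ).smulRight v).hasFDerivAt

theorem IsRegularValue.transversal_of_lineSweep (h : IsRegularValue (lineSweep F v) a)
    {y : E} {t : ℝ} (hy : F y = a + t • v) :
    DifferentiableAt ℝ F y ∧ v ∉ LinearMap.range (fderiv ℝ F y : E →ₗ[ℝ] W) := by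
  obtain ⟨hd, hinj⟩ := h (y, t) (by simp [lineSweep, hy])
  have hFd : DifferentiableAt ℝ F y := by
    have hF : F = fun y' => lineSweep F v (y', t) + t • v := by
      funext y'; simp [lineSweep]
    have hslice : DifferentiableAt ℝ (fun y' : E => (y', t)) y :=
      differentiableAt_id.prodMk (differentiableAt_const t)
    rw [hF]
    exact (hd.comp y hslice).add_const _
  refine ⟨hFd, fun ⟨w, hw⟩ => ?_⟩
  rw [(hFd.hasFDerivAt.lineSweep v t).fderiv] at hinj
  have : ((w, 1) : E × ℝ) = 0 := hinj (by simp [show fderiv ℝ F y w = v from hw])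
  simpa using congrArg Prod.snd this

theorem IsRegularValue.finite_of_lineSweep [FiniteDimensional ℝ E]
    (h : IsRegularValue (lineSweep F v) a) (hF : Continuous F) (hv : v ≠ 0) {s : Set E}
    (hs : Bornology.IsBounded s) :
    {y | y ∈ s ∧ ∃ t : ℝ, F y = a + t • v}.Finite := by
  obtain ⟨C, hC⟩ := hs.isCompact_closure.exists_bound_of_continuousOn
    (f := fun y => F y - a) (by fun_prop)
  set K : Set (E × ℝ) := closure s ×ˢ closedBall 0 (C / ‖v‖)
  have hK : IsCompact K := hs.isCompact_closure.prod (isCompact_closedBall 0 _)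
  have hcont : Continuous (lineSweep F v) :=
    (hF.comp continuous_fst).sub (continuous_snd.smul continuous_const)
  refine ((h.finite_inter_preimage hcont hK).image Prod.fst).subset ?_
  rintro y ⟨hys, t, ht⟩
  have ht_bound : |t| * ‖v‖ ≤ C := by
    simpa [ht, norm_smul] using hC y (subset_closure hys)
  refine ⟨(y, t), ⟨⟨subset_closure hys, ?_⟩, by simp [lineSweep, ht]⟩, rfl⟩
  rw [mem_closedBall_zero_iff, Real.norm_eq_abs, le_div_iff₀ (norm_pos_iff.mpr hv)]
  exact ht_bound

end LineSweep

theorem statement17_general (v : E3) (hv : ‖v‖ = 1) (F : E2 → E3) (L : NNReal)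
    (hF : LipschitzWith L F) (r : ℝ) :
    ∀ᵐ a : E3 ∂volume,
      Set.Finite {y' : E2 | y' ∈ Metric.ball 0 r ∧ ∃ t : ℝ, F y' = a + t • v} ∧
      ∀ y' ∈ {y' : E2 | y' ∈ Metric.ball 0 r ∧ ∃ t : ℝ, F y' = a + t • v},
        DifferentiableAt ℝ F y' ∧
        v ∉ Submodule.span ℝ
          ({fderiv ℝ F y' (EuclideanSpace.single 0 1),
            fderiv ℝ F y' (EuclideanSpace.single 1 1)} : Set E3) := by
  have hv0 : v ≠ 0 := norm_ne_zero_iff.mp (by simp [hv])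
  have hdim : Module.finrank ℝ (E2 × ℝ) = Module.finrank ℝ E3 := by simp
  filter_upwards [(hF.lineSweep v).ae_isRegularValue volume hdim]
    with a (ha : IsRegularValue _ a)
  refine ⟨ha.finite_of_lineSweep hF.continuous hv0 isBounded_ball, ?_⟩
  rintro y ⟨-, t, ht⟩
  obtain ⟨hd, hv_range⟩ := ha.transversal_of_lineSweep ht
  refine ⟨hd, fun hspan => hv_range (Submodule.span_le.mpr ?_ hspan)⟩
  rintro _ (rfl | rfl) <;> exact LinearMap.mem_range_self _ _

/-- For a.e. a ∈ ℝ³, the Lipschitz surface F(B'_r) meets the line a + ℝv in finitely many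
points, at each of which F is differentiable with v transversal to the tangent plane. -/
theorem statement17 (v : E3) (hv : ‖v‖ = 1) (F : E2 → E3) (L : NNReal)
    (hF : LipschitzWith L F) (r : ℝ) (hr : 0 < r) :
    ∀ᵐ a : E3 ∂volume,
      Set.Finite {y' : E2 | y' ∈ Metric.ball 0 r ∧ ∃ t : ℝ, F y' = a + t • v} ∧
      ∀ y' ∈ {y' : E2 | y' ∈ Metric.ball 0 r ∧ ∃ t : ℝ, F y' = a + t • v},
        DifferentiableAt ℝ F y' ∧
        v ∉ Submodule.span ℝ
          ({fderiv ℝ F y' (EuclideanSpace.single 0 1),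
            fderiv ℝ F y' (EuclideanSpace.single 1 1)} : Set E3) :=
  statement17_general v hv F L hF r

end
end

section
/- Let n ≥ 1, let f : ℝ^{n−1} → ℝ be Lipschitz with f(0) = 0, differentiable at 0 with Df(0) = 0, let r > 0, and let Ω ⊆ ℝⁿ be an open set with Ω ∩ B_r = {y ∈ B_r : y_n < f(y₁,…,y_{n−1})}, where B_r is the open ball of radius r centered at 0 in ℝⁿ. Let v ∈ ℝⁿ with |v| = 1 and v_n > 0. Then there are constants c, c', ρ > 0 such that: (a) t ≤ c·dist(tv, Ω) for all t ∈ [0,ρ]; and (b) |y| ≤ c'|tv − y| for all t ∈ [0,ρ] and all y ∈ Ω. -/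
/-!
Write `a = vₙ > 0`. Since `Df(0) = 0`, near the origin `|f(x)| ≤ (a/4)|x|`, so the points `y ∈ Ω`
close to `0` lie below the flat cone `yₙ ≤ (a/4)|y|`. For such a point with `|y| ≤ 2t`, the
`n`-th coordinate alone gives `|tv − y| ≥ ta − yₙ ≥ at/2 ≥ a|y|/4`; a point with `|y| > 2t` is at
distance at least `|y| − t ≥ max(t, |y|/2)` from `tv`. Hence one can take `c = 2/a`, `c' = 4/a`.
-/

open Metric Set

section Escape

variable {E : Type*} [NormedAddCommGroup E] [NormedSpace ℝ E] {v y : E} {t : ℝ}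

lemma le_norm_smul_sub_of_two_mul_lt_norm (hv : ‖v‖ = 1) (ht : 0 ≤ t) (h : 2 * t < ‖y‖) :
    t ≤ ‖t • v - y‖ ∧ ‖y‖ ≤ 2 * ‖t • v - y‖ := by
  have hyt : ‖y‖ - t ≤ ‖t • v - y‖ := by
    simpa [norm_smul, hv, abs_of_nonneg ht, norm_sub_rev] using norm_sub_norm_le y (t • v)
  constructor <;> linarith

lemma escape_bounds_of_apply_le_mul_norm (ℓ : E →ₗ[ℝ] ℝ) (hℓ : ∀ x, ℓ x ≤ ‖x‖)
    (hv : ‖v‖ = 1) (ha : 0 < ℓ v) (ht : 0 ≤ t) (hy : ‖y‖ ≤ 2 * t → ℓ y ≤ ℓ v / 4 * ‖y‖) :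
    ℓ v / 2 * t ≤ ‖t • v - y‖ ∧ ‖y‖ ≤ 4 / ℓ v * ‖t • v - y‖ := by
  set a := ℓ v
  have ha1 : a ≤ 1 := hv ▸ hℓ v
  by_cases hfar : 2 * t < ‖y‖
  · obtain ⟨hvt, hvy⟩ := le_norm_smul_sub_of_two_mul_lt_norm hv ht hfar
    have h4a : 2 ≤ 4 / a := by rw [le_div_iff₀ ha]; linarith
    constructor <;> nlinarith [norm_nonneg (t • v - y)]
  · replace hfar := not_lt.1 hfar
    have hℓy : ℓ y ≤ a / 2 * t := by nlinarith [hy hfar]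
    have hnear : a / 2 * t ≤ ‖t • v - y‖ := by
      have := hℓ (t • v - y)
      rw [map_sub, map_smul, smul_eq_mul] at this
      nlinarith
    refine ⟨hnear, ?_⟩
    calc ‖y‖ ≤ 4 / a * (a / 2 * t) := by field_simp; linarith
      _ ≤ 4 / a * ‖t • v - y‖ := by gcongr

end Escape

lemma exists_abs_le_mul_norm_of_hasFDerivAt_zero {E : Type*} [NormedAddCommGroup E]
    [NormedSpace ℝ E] {f : E → ℝ} (hf0 : f 0 = 0) (hdf : HasFDerivAt f (0 : E →L[ℝ] ℝ) 0)
    {ε : ℝ} (hε : 0 < ε) : ∃ δ > 0, ∀ x : E, ‖x‖ < δ → |f x| ≤ ε * ‖x‖ := by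
  have hfo : f =o[nhds 0] fun x => x := by simpa [hf0] using hdf.isLittleO
  obtain ⟨δ, hδ, hball⟩ := Metric.eventually_nhds_iff.1 (hfo.def hε)
  exact ⟨δ, hδ, fun x hx => by simpa using hball (by simpa using hx)⟩

lemma norm_toLp_castSucc_le {m : ℕ} (y : EuclideanSpace ℝ (Fin (m + 1))) :
    ‖(WithLp.toLp 2 (fun i : Fin m => y i.castSucc) : EuclideanSpace ℝ (Fin m))‖ ≤ ‖y‖ := by
  rw [EuclideanSpace.norm_eq, EuclideanSpace.norm_eq, Fin.sum_univ_castSucc]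
  gcongr
  simpa using sq_nonneg ‖y (Fin.last m)‖

section Subgraph

variable {m : ℕ} {f : EuclideanSpace ℝ (Fin m) → ℝ} {r : ℝ}
  {Ω : Set (EuclideanSpace ℝ (Fin (m + 1)))}

lemma exists_last_lt_mul_norm_of_subgraph (hf0 : f 0 = 0)
    (hdf : HasFDerivAt f (0 : EuclideanSpace ℝ (Fin m) →L[ℝ] ℝ) 0) (hr : 0 < r)
    (hgraph : Ω ∩ Metric.ball 0 r =
      {y | y ∈ Metric.ball 0 r ∧
        y (Fin.last m) < f (WithLp.toLp 2 (fun i : Fin m => y i.castSucc))})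
    {ε : ℝ} (hε : 0 < ε) : ∃ δ > 0, ∀ y ∈ Ω, ‖y‖ ≤ δ → y (Fin.last m) < ε * ‖y‖ := by
  obtain ⟨δ₀, hδ₀, hsmall⟩ := exists_abs_le_mul_norm_of_hasFDerivAt_zero hf0 hdf hε
  refine ⟨min δ₀ r / 2, by positivity, fun y hy hyδ => ?_⟩
  have hmin := lt_min hδ₀ hr
  have hyr : y ∈ Ω ∩ ball 0 r :=
    ⟨hy, mem_ball_zero_iff.2 (by linarith [min_le_right δ₀ r])⟩
  rw [hgraph] at hyr
  have hproj := norm_toLp_castSucc_le y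
  set ŷ : EuclideanSpace ℝ (Fin m) := WithLp.toLp 2 (fun i : Fin m => y i.castSucc)
  calc y (Fin.last m) < f ŷ := hyr.2
    _ ≤ |f ŷ| := le_abs_self _
    _ ≤ ε * ‖ŷ‖ := hsmall ŷ (by linarith [min_le_left δ₀ r])
    _ ≤ ε * ‖y‖ := by gcongr

lemma nonempty_of_subgraph (hf0 : f 0 = 0) (hr : 0 < r)
    (hgraph : Ω ∩ Metric.ball 0 r =
      {y | y ∈ Metric.ball 0 r ∧
        y (Fin.last m) < f (WithLp.toLp 2 (fun i : Fin m => y i.castSucc))}) :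
    Ω.Nonempty := by
  have hmem : EuclideanSpace.single (Fin.last m) (-(r / 2)) ∈ Ω ∩ ball 0 r := by
    rw [hgraph]
    refine ⟨?_, ?_⟩
    · rw [mem_ball_zero_iff, PiLp.norm_single, norm_neg, Real.norm_of_nonneg (by positivity)]
      linarith
    · have hproj : (WithLp.toLp 2 (fun i : Fin m =>
          EuclideanSpace.single (Fin.last m) (-(r / 2)) i.castSucc)) = 0 := by
        ext i
        simp [(Fin.castSucc_lt_last i).ne]
      show _ < f _
      rw [hproj, hf0]
      simpa using hr
  exact ⟨_, hmem.1⟩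

end Subgraph

theorem statement18_general (m : ℕ) (f : EuclideanSpace ℝ (Fin m) → ℝ) (L : NNReal)
    (hf0 : f 0 = 0)
    (hdf : HasFDerivAt f (0 : EuclideanSpace ℝ (Fin m) →L[ℝ] ℝ) 0)
    (r : ℝ) (hr : 0 < r)
    (Ω : Set (EuclideanSpace ℝ (Fin (m+1))))
    (hgraph : Ω ∩ Metric.ball 0 r =
      {y | y ∈ Metric.ball 0 r ∧
        y (Fin.last m) < f (WithLp.toLp 2 (fun i : Fin m => y i.castSucc))})
    (v : EuclideanSpace ℝ (Fin (m+1))) (hv : ‖v‖ = 1) (hvn : 0 < v (Fin.last m)) :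
    ∃ c c' ρ : ℝ, 0 < c ∧ 0 < c' ∧ 0 < ρ ∧
      (∀ t ∈ Set.Icc (0:ℝ) ρ, t ≤ c * Metric.infDist (t • v) Ω) ∧
      (∀ t ∈ Set.Icc (0:ℝ) ρ, ∀ y ∈ Ω, ‖y‖ ≤ c' * dist (t • v) y) := by
  set a := v (Fin.last m)
  obtain ⟨δ, hδ, hcone⟩ :=
    exists_last_lt_mul_norm_of_subgraph hf0 hdf hr hgraph (ε := a / 4) (by positivity)
  have key : ∀ t ∈ Icc (0 : ℝ) (δ / 2), ∀ y ∈ Ω,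
      a / 2 * t ≤ dist (t • v) y ∧ ‖y‖ ≤ 4 / a * dist (t • v) y := by
    rintro t ⟨ht0, htδ⟩ y hy
    rw [dist_eq_norm]
    exact escape_bounds_of_apply_le_mul_norm (EuclideanSpace.proj (Fin.last m)).toLinearMap
      (fun x => (le_abs_self _).trans (PiLp.norm_apply_le x _)) hv hvn ht0
      fun h => (hcone y hy (by linarith)).le
  refine ⟨2 / a, 4 / a, δ / 2, by positivity, by positivity, by positivity, fun t ht => ?_,
    fun t ht y hy => (key t ht y hy).2⟩
  have hinf : a / 2 * t ≤ infDist (t • v) Ω :=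
    (le_infDist (nonempty_of_subgraph hf0 hr hgraph)).2 fun y hy => (key t ht y hy).1
  calc t = 2 / a * (a / 2 * t) := by field_simp
    _ ≤ 2 / a * infDist (t • v) Ω := by gcongr

/-- Near a boundary point of a Lipschitz subgraph domain with normal eₙ, moving in a
direction v with v·eₙ > 0 one leaves Ω at linear rate: t ≤ c dist(tv, Ω), and
|y| ≤ c'|tv − y| for all y ∈ Ω and small t ≥ 0.  (Here n = m+1 ≥ 1 and the boundary
point is the origin.) -/
theorem statement18 (m : ℕ) (f : EuclideanSpace ℝ (Fin m) → ℝ) (L : NNReal)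
    (hf : LipschitzWith L f) (hf0 : f 0 = 0)
    (hdf : HasFDerivAt f (0 : EuclideanSpace ℝ (Fin m) →L[ℝ] ℝ) 0)
    (r : ℝ) (hr : 0 < r)
    (Ω : Set (EuclideanSpace ℝ (Fin (m+1)))) (hΩ : IsOpen Ω)
    (hgraph : Ω ∩ Metric.ball 0 r =
      {y | y ∈ Metric.ball 0 r ∧
        y (Fin.last m) < f (WithLp.toLp 2 (fun i : Fin m => y i.castSucc))})
    (v : EuclideanSpace ℝ (Fin (m+1))) (hv : ‖v‖ = 1) (hvn : 0 < v (Fin.last m)) :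
    ∃ c c' ρ : ℝ, 0 < c ∧ 0 < c' ∧ 0 < ρ ∧
      (∀ t ∈ Set.Icc (0:ℝ) ρ, t ≤ c * Metric.infDist (t • v) Ω) ∧
      (∀ t ∈ Set.Icc (0:ℝ) ρ, ∀ y ∈ Ω, ‖y‖ ≤ c' * dist (t • v) y) :=
  statement18_general m f L hf0 hdf r hr Ω hgraph v hv hvn
end
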